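/- Let X be a Hausdorff space such that every point x ∈ X admits a countable family of open neighborhoods whose closures intersect exactly in {x}, and assume that the closure of every countable strongly discrete subset of X is countably compact. Then X is countably compact. -/

import Mathlib

open Set

def StronglyDiscrete {X : Type*} [TopologicalSpace X] (D : Set X) : Prop :=
  ∃ U : X → Set X, (∀ d ∈ D, IsOpen (U d) ∧ d ∈ U d) ∧ D.PairwiseDisjoint U

def CountablyCompactSet {X : Type*} [TopologicalSpace X] (s : Set X) : Prop :=
  ∀ U : ℕ → Set X, (∀ n, IsOpen (U n)) → s ⊆ ⋃ n, U n → ∃ t : Finset ℕ, s ⊆ ⋃ n ∈ t, U n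

/-!
If `X` is not countably compact, it carries a sequence `u` without cluster points. It suffices to
find a countable strongly discrete `D` whose closure contains a subsequence of `u`: since
`closure D` is countably compact, that subsequence would have a cluster point.

If infinitely many `u m` are isolated, they form `D`. If every `u m` has a pseudo-neighbourhood
`V (u m) n` whose closure misses almost all terms, a subsequence has pairwise disjoint
neighbourhoods. Otherwise some `e` has every `closure (V e i)` containing terms `c i ≠ e` of `u`;
being non-isolated, `c i` is approached inside `V e i` by points outside a fixed
`closure (V e M)`. Placing these points in disjoint rings `V e i \ closure (V e i')` and, within one
column, in disjoint rings of the pseudobase at `c i` gives a strongly discrete `D` whose `i`-th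
column can only accumulate at `c i`; so the `c i` lie in `closure D`.
-/

open Filter Function Topology

theorem exists_strictMono_forall_lt_of_eventually {R : ℕ → ℕ → Prop}
    (h : ∀ a, ∀ᶠ b in atTop, R a b) :
    ∃ f : ℕ → ℕ, StrictMono f ∧ ∀ m n, m < n → R (f m) (f n) := by
  obtain ⟨f, -, hf⟩ := exists_seq_of_forall_finset_exists (fun _ => True)
    (fun a b => a < b ∧ R a b) fun s _ =>
      let ⟨y, hy⟩ := ((eventually_all_finset s).2 fun a _ =>
        (eventually_gt_atTop a).and (h a)).exists
      ⟨y, trivial, hy⟩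
  exact ⟨f, fun m n hmn => (hf m n hmn).1, fun m n hmn => (hf m n hmn).2⟩

section

variable {X : Type*} [TopologicalSpace X]

theorem stronglyDiscrete_of_isOpen_singleton {D : Set X} (hD : ∀ d ∈ D, IsOpen {d}) :
    StronglyDiscrete D :=
  ⟨fun d => {d}, fun d hd => ⟨hD d hd, rfl⟩, fun _ _ _ _ hab => disjoint_singleton.2 hab⟩

theorem stronglyDiscrete_range {ι : Type*} {f : ι → X} {G : ι → Set X}
    (hG : ∀ i, IsOpen (G i)) (hf : ∀ i, f i ∈ G i) (hdisj : Pairwise (Disjoint on G)) :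
    StronglyDiscrete (range f) := by
  refine ⟨fun x => ⋃ (i) (_ : f i = x), G i, ?_, ?_⟩
  · rintro _ ⟨i, rfl⟩
    exact ⟨isOpen_iUnion fun j => isOpen_iUnion fun _ => hG j,
      mem_iUnion₂.2 ⟨i, rfl, hf i⟩⟩
  · rintro _ ⟨i, rfl⟩ _ ⟨j, rfl⟩ hij
    simp only [onFun, disjoint_iUnion_left, disjoint_iUnion_right]
    rintro l hl k hk
    exact hdisj fun hkl => hij (hk ▸ hl ▸ congrArg f hkl)

theorem Antitone.pairwise_disjoint_diff_closure {W : ℕ → Set X} (hW : Antitone W) :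
    Pairwise (Disjoint on fun n => W n \ closure (W (n + 1))) :=
  (pairwise_disjoint_on _).2 fun _ _ hmn =>
    disjoint_left.2 fun _ hy hy' => hy.2 (subset_closure (hW hmn hy'.1))

theorem exists_forall_not_mapClusterPt (h : ¬CountablyCompactSet (univ : Set X)) :
    ∃ u : ℕ → X, ∀ x, ¬MapClusterPt x atTop u := by
  simp only [CountablyCompactSet, not_forall, not_exists, exists_prop] at h
  obtain ⟨U, hUo, hUcov, hU⟩ := h
  have hescape : ∀ k, ∃ x, x ∉ ⋃ n ∈ Finset.range (k + 1), U n := fun k =>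
    let ⟨x, _, hx⟩ := not_subset.1 (hU (Finset.range (k + 1)))
    ⟨x, hx⟩
  choose u hu using hescape
  refine ⟨u, fun x hx => ?_⟩
  obtain ⟨N, hN⟩ := mem_iUnion.1 (hUcov (mem_univ x))
  obtain ⟨k, hNk, hk⟩ :=
    (mapClusterPt_iff_frequently.1 hx _ ((hUo N).mem_nhds hN)).forall_exists_of_atTop N
  exact hu k (mem_iUnion₂.2 ⟨N, Finset.mem_range.2 (Nat.lt_succ_of_le hNk), hk⟩)

theorem CountablyCompactSet.exists_mapClusterPt {s : Set X} (hs : CountablyCompactSet s)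
    {u : ℕ → X} (hu : ∀ n, u n ∈ s) : ∃ x ∈ s, MapClusterPt x atTop u := by
  by_contra! h
  simp only [mapClusterPt_atTop_iff_forall_mem_closure, not_forall] at h
  obtain ⟨t, ht⟩ := hs (fun n => (closure (u '' Ici n))ᶜ)
    (fun n => isClosed_closure.isOpen_compl) fun x hx => mem_iUnion.2 (h x hx)
  obtain ⟨n, hn, hmem⟩ := mem_iUnion₂.1 (ht (hu (t.sup id)))
  exact hmem (subset_closure ⟨t.sup id, Finset.le_sup (f := id) hn, rfl⟩)

theorem not_stronglyDiscrete_range_comp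
    (hsd : ∀ D : Set X, D.Countable → StronglyDiscrete D → CountablyCompactSet (closure D))
    {u : ℕ → X} (hu : ∀ x, ¬MapClusterPt x atTop u) {φ : ℕ → ℕ}
    (hφ : Tendsto φ atTop atTop) : ¬StronglyDiscrete (range (u ∘ φ)) := fun hD =>
  let ⟨x, _, hx⟩ := (hsd _ (countable_range _) hD).exists_mapClusterPt
    fun n => subset_closure (mem_range_self n)
  hu x (hx.of_comp hφ)

theorem exists_strictMono_stronglyDiscrete_range {u : ℕ → X} {O : ℕ → Set X}
    (hO : ∀ i, IsOpen (O i)) (hu : ∀ i, u i ∈ O i)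
    (hev : ∀ i, ∀ᶠ k in atTop, u k ∉ closure (O i)) :
    ∃ φ : ℕ → ℕ, StrictMono φ ∧ StronglyDiscrete (range (u ∘ φ)) := by
  obtain ⟨φ, hφ, hsep⟩ := exists_strictMono_forall_lt_of_eventually hev
  refine ⟨φ, hφ,
    stronglyDiscrete_range (G := fun s => O (φ s) \ ⋃ r ∈ Iio s, closure (O (φ r)))
    (fun s => (hO _).sdiff ((finite_Iio s).isClosed_biUnion fun _ _ => isClosed_closure))
    (fun s => ⟨hu _, by simpa using fun r hr => hsep r s hr⟩) ?_⟩
  refine (pairwise_disjoint_on _).2 fun r s hrs => disjoint_left.2 fun y hyr hys => ?_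
  exact hys.2 (mem_iUnion₂.2 ⟨r, hrs, subset_closure hyr.1⟩)

end

structure ClosedPseudobase (X : Type*) [TopologicalSpace X] where
  nbhd : X → ℕ → Set X
  isOpen_nbhd : ∀ x n, IsOpen (nbhd x n)
  mem_nbhd : ∀ x n, x ∈ nbhd x n
  antitone_nbhd : ∀ x, Antitone (nbhd x)
  iInter_closure_nbhd : ∀ x, ⋂ n, closure (nbhd x n) = {x}

namespace ClosedPseudobase

variable {X : Type*} [TopologicalSpace X]

theorem nonempty_of_iInter_closure_eq
    (h : ∀ x : X, ∃ V : ℕ → Set X, (∀ n, IsOpen (V n) ∧ x ∈ V n) ∧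
      ⋂ n, closure (V n) = {x}) :
    Nonempty (ClosedPseudobase X) := by
  choose V hV hVi using h
  refine ⟨⟨fun x n => ⋂ k ∈ Iic n, V x k,
    fun x n => (finite_Iic n).isOpen_biInter fun k _ => (hV x k).1,
    fun x n => mem_iInter₂.2 fun k _ => (hV x k).2,
    fun x m n hmn => biInter_subset_biInter_left (Iic_subset_Iic.2 hmn), fun x => ?_⟩⟩
  refine Subset.antisymm ?_ (singleton_subset_iff.2 (mem_iInter.2 fun n =>
    subset_closure (mem_iInter₂.2 fun k _ => (hV x k).2)))
  rw [← hVi x]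
  exact iInter_mono fun n => closure_mono (biInter_subset_of_mem self_mem_Iic)

variable (P : ClosedPseudobase X)

theorem eq_of_forall_mem_closure {x y : X} (h : ∀ n, y ∈ closure (P.nbhd x n)) : y = x := by
  simpa [P.iInter_closure_nbhd x] using mem_iInter.2 h

theorem eventually_notMem_closure {x y : X} (h : y ≠ x) :
    ∀ᶠ n in atTop, y ∉ closure (P.nbhd x n) := by
  obtain ⟨n, hn⟩ : ∃ n, y ∉ closure (P.nbhd x n) := by
    by_contra! hy
    exact h (P.eq_of_forall_mem_closure hy)
  exact eventually_atTop.2 ⟨n, fun m hm hy => hn (closure_mono (P.antitone_nbhd x hm) hy)⟩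

theorem eq_of_mapClusterPt {x y : X} {w : ℕ → X}
    (hw : ∀ n, ∀ᶠ r in atTop, w r ∈ P.nbhd x n) (hy : MapClusterPt y atTop w) : y = x :=
  P.eq_of_forall_mem_closure fun n => hy.mem_closure_of_mem _ (hw n)

theorem exists_forall_exists_notMem_closure {x e : X} (hxe : x ≠ e) (hx : ¬IsOpen {x})
    {O : Set X} (hO : IsOpen O) (hxO : x ∈ closure O) :
    ∃ M, ∀ κ, ∃ z ∈ P.nbhd x κ ∩ O, z ∉ closure (P.nbhd e M) ∧ z ≠ x := by
  by_contra! h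
  refine hxe (P.eq_of_forall_mem_closure fun M => ?_)
  obtain ⟨κ, hκ⟩ := h M
  have hW : IsOpen (P.nbhd x κ ∩ O) := (P.isOpen_nbhd x κ).inter hO
  have hx' : x ∈ closure (P.nbhd x κ ∩ O ∩ {x}ᶜ) :=
    closure_minimal ((dense_compl_singleton_iff_not_open.2 hx).open_subset_closure_inter hW)
      isClosed_closure ((P.isOpen_nbhd x κ).inter_closure ⟨P.mem_nbhd x κ, hxO⟩)
  refine closure_minimal (fun z hz => ?_) isClosed_closure hx'
  by_contra hzM
  exact hz.2 (hκ z hz.1 hzM)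

theorem exists_stronglyDiscrete_columns {e : X} {c : ℕ → X} (hce : ∀ i, c i ≠ e)
    (hc : ∀ i, ¬IsOpen {c i}) (hcl : ∀ i, c i ∈ closure (P.nbhd e i)) :
    ∃ (j : ℕ → ℕ) (pt : ℕ × ℕ → X), StrictMono j ∧ StronglyDiscrete (range pt) ∧
      ∀ s n, ∀ᶠ r in atTop, pt (s, r) ∈ P.nbhd (c (j s)) n := by
  choose M z hz hzM hzc using fun i =>
    P.exists_forall_exists_notMem_closure (hce i) (hc i) (P.isOpen_nbhd e i) (hcl i)
  choose κ hκ hκz using fun i =>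
    exists_strictMono_forall_lt_of_eventually fun k => P.eventually_notMem_closure (hzc i k)
  obtain ⟨j, hj, hjM⟩ :=
    exists_strictMono_forall_lt_of_eventually fun i => eventually_ge_atTop (M i)
  -- rings around `c (j s)` separate the points of a column, rings around `e` separate columns
  let G (p : ℕ × ℕ) : Set X :=
    (P.nbhd (c (j p.1)) (κ (j p.1) p.2) \ closure (P.nbhd (c (j p.1)) (κ (j p.1) (p.2 + 1)))) ∩
      (P.nbhd e (j p.1) \ closure (P.nbhd e (j (p.1 + 1))))
  refine ⟨j, fun p => z (j p.1) (κ (j p.1) p.2), hj,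
    stronglyDiscrete_range (G := G) ?_ ?_ ?_, ?_⟩
  · rintro ⟨s, r⟩
    exact ((P.isOpen_nbhd _ _).sdiff isClosed_closure).inter
      ((P.isOpen_nbhd _ _).sdiff isClosed_closure)
  · rintro ⟨s, r⟩
    refine ⟨⟨(hz _ _).1, hκz _ r (r + 1) r.lt_succ_self⟩, (hz _ _).2,
      fun h => hzM (j s) (κ (j s) r) ?_⟩
    exact closure_mono (P.antitone_nbhd e (hjM s (s + 1) s.lt_succ_self)) h
  · rintro ⟨s, r⟩ ⟨s', r'⟩ hne
    rcases eq_or_ne s s' with rfl | hs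
    · have hr : r ≠ r' := fun h => hne (by rw [h])
      exact (((P.antitone_nbhd _).comp_monotone (hκ _).monotone).pairwise_disjoint_diff_closure
        hr).mono inter_subset_left inter_subset_left
    · exact (((P.antitone_nbhd e).comp_monotone hj.monotone).pairwise_disjoint_diff_closure
        hs).mono inter_subset_right inter_subset_right
  · intro s n
    filter_upwards [eventually_ge_atTop n] with r hr
    exact P.antitone_nbhd _ (hr.trans ((hκ _).id_le r)) (hz _ _).1

theorem false_of_frequently_mem_closure
    (hsd : ∀ D : Set X, D.Countable → StronglyDiscrete D → CountablyCompactSet (closure D))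
    {u : ℕ → X} (hu : ∀ x, ¬MapClusterPt x atTop u) (hni : ∀ᶠ m in atTop, ¬IsOpen {u m})
    {e : X} (he : ∀ n, ∃ᶠ m in atTop, u m ∈ closure (P.nbhd e n)) : False := by
  have hne : ∀ᶠ m in atTop, u m ≠ e := by
    obtain ⟨W, hW, hWu⟩ : ∃ W ∈ 𝓝 e, ∀ᶠ m in atTop, u m ∉ W := by
      simpa [mapClusterPt_iff_frequently] using hu e
    exact hWu.mono fun m hm h => hm (h ▸ mem_of_mem_nhds hW)
  choose m hm hmcl hme hmi using fun i =>
    ((he i).and_eventually (hne.and hni)).forall_exists_of_atTop i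
  obtain ⟨j, pt, hj, hD, hpt⟩ :=
    P.exists_stronglyDiscrete_columns (c := fun i => u (m i)) hme hmi hmcl
  have hacc : ∀ s, u (m (j s)) ∈ closure (range pt) := fun s => by
    obtain ⟨x, hx, hcl⟩ := (hsd _ (countable_range pt) hD).exists_mapClusterPt
      (u := fun r => pt (s, r)) fun r => subset_closure (mem_range_self _)
    rwa [← P.eq_of_mapClusterPt (hpt s) hcl]
  obtain ⟨x, -, hx⟩ := (hsd _ (countable_range pt) hD).exists_mapClusterPt hacc
  exact hu x (hx.of_comp (tendsto_atTop_mono (fun s => (hj.id_le s).trans (hm (j s))) tendsto_id))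

end ClosedPseudobase

theorem stmt5_general {X : Type*} [TopologicalSpace X]
    (hpsi : ∀ x : X, ∃ V : ℕ → Set X, (∀ n, IsOpen (V n) ∧ x ∈ V n) ∧
      ⋂ n, closure (V n) = {x})
    (hsd : ∀ D : Set X, D.Countable → StronglyDiscrete D → CountablyCompactSet (closure D)) :
    CountablyCompactSet (univ : Set X) := by
  obtain ⟨P⟩ := ClosedPseudobase.nonempty_of_iInter_closure_eq hpsi
  by_contra hX
  obtain ⟨u, hu⟩ := exists_forall_not_mapClusterPt hX
  by_cases hiso : ∃ᶠ m in atTop, IsOpen {u m}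
  · obtain ⟨φ, hφ, hφiso⟩ := extraction_of_frequently_atTop hiso
    refine not_stronglyDiscrete_range_comp hsd hu hφ.tendsto_atTop ?_
    exact stronglyDiscrete_of_isOpen_singleton (by rintro _ ⟨n, rfl⟩; exact hφiso n)
  by_cases he : ∃ e, ∀ n, ∃ᶠ m in atTop, u m ∈ closure (P.nbhd e n)
  · obtain ⟨e, he⟩ := he
    exact P.false_of_frequently_mem_closure hsd hu (not_frequently.1 hiso) he
  push Not at he
  choose n hn using he
  obtain ⟨φ, hφ, hD⟩ := exists_strictMono_stronglyDiscrete_range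
    (O := fun i => P.nbhd (u i) (n (u i))) (fun i => P.isOpen_nbhd _ _) (fun i => P.mem_nbhd _ _)
    fun i => hn (u i)
  exact not_stronglyDiscrete_range_comp hsd hu hφ.tendsto_atTop hD

theorem stmt5 {X : Type*} [TopologicalSpace X] [T2Space X]
    (hpsi : ∀ x : X, ∃ V : ℕ → Set X, (∀ n, IsOpen (V n) ∧ x ∈ V n) ∧
      ⋂ n, closure (V n) = {x})
    (hsd : ∀ D : Set X, D.Countable → StronglyDiscrete D → CountablyCompactSet (closure D)) :
    CountablyCompactSet (univ : Set X) :=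
  stmt5_general hpsi hsd
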